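/- (Theorem 1, robustness part, scalarized form.) Let φ₁, …, φₙ : ℝ → ℝ each be [0,1]-slope-restricted and let Φ : ℝⁿ → ℝⁿ be the diagonal map (Φ(v))ᵢ = φᵢ(vᵢ). Let Ψ_z ∈ ℝ^{n×n}, Ψ_u ∈ ℝ^{n×n_u}, Ψ_{g,z} ∈ ℝ^{n_g×n}, Ψ_{g,u} ∈ ℝ^{n_g×n_u}, β ∈ ℝⁿ, β_g ∈ ℝ^{n_g} define the network g(u) = Ψ_{g,z} z + Ψ_{g,u} u + β_g where z solves z = Φ(Ψ_z z + Ψ_u u + β). Let ε_{u,1}, ε_{u,2} ≥ 0, let 𝕋_z ∈ ℝ^{n×n} and 𝕋_g ∈ ℝ^{n_g×n_g} be diagonal with positive diagonal entries, let 𝕋_{u,1}, 𝕋_{u,2} ≥ 0, and let γ, γ_{u,1}, γ_{u,2} ≥ 0. Suppose that for all a₊, a₋ ∈ ℝ^{n_g}, c₊, c₋ ∈ ℝ^{n_u}, z̃ ∈ ℝⁿ, ũ ∈ ℝ^{n_u}, and t ∈ ℝ, the quadratic form E := −a₊ᵀ𝕋_g a₊ − a₋ᵀ𝕋_g a₋ +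 2(a₊ − a₋)ᵀ𝕋_g(Ψ_{g,z} z̃ + Ψ_{g,u} ũ) + t·𝟙ᵀ(a₊ + a₋) − (1/2)(𝕋_{u,2} + γ_{u,2})(‖c₊‖₂² + ‖c₋‖₂²) − t(𝕋_{u,1} + γ_{u,1})·𝟙ᵀ(c₊ + c₋) + 2 z̃ᵀ𝕋_z(Ψ_z z̃ + Ψ_u ũ − z̃) − (1/2)(𝕋_{u,2} + γ_{u,2})‖ũ‖₂² + t²(𝕋_{u,1} ε_{u,1} + 𝕋_{u,2} ε_{u,2} − γ) satisfies E ≤ 0. Then for all inputs u₁, u₂ ∈ ℝ^{n_u} with ‖u₁ − u₂‖₁ ≤ ε_{u,1} and ‖u₁ − u₂‖₂² ≤ ε_{u,2}, and all states z₁, z₂ solving the implicit equations zⱼ = Φ(Ψ_z zⱼ + Ψ_u uⱼ + β), the corresponding outputs gⱼ = Ψ_{g,z} zⱼ + Ψ_{g,u} uⱼ + β_g satisfy ‖g₁ − g₂‖₁ ≤ γ + γ_{u,1}‖u₁ − u₂‖₁ + γ_{u,2}‖u₁ − u₂‖₂². -/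

import Mathlib

/-!
Evaluate `E` at `t = 1`, `z̃ = z₁ - z₂`, `ũ = u₁ - u₂` and at the positive and negative parts of
`g̃ = Ψ_{g,z} z̃ + Ψ_{g,u} ũ` and of `ũ`. Since `a⁺ - a⁻ = a`, `a⁺ + a⁻ = |a|` and
`(a⁺)² + (a⁻)² = a²`, the inequality `E ≤ 0` becomes
`∑ 𝕋_g g̃ᵢ² + ‖g̃‖₁ + 2 z̃ᵀ𝕋_z(Ψ_z z̃ + Ψ_u ũ - z̃)
  ≤ γ + (𝕋_{u,1} + γ_{u,1}) ‖ũ‖₁ + (𝕋_{u,2} + γ_{u,2}) ‖ũ‖₂² - 𝕋_{u,1} ε_{u,1} - 𝕋_{u,2} ε_{u,2}`.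
The first sum is nonnegative, and so is the `z̃` term: `Ψ_z z̃ + Ψ_u ũ` is the difference
`v₁ - v₂` of the arguments of `Φ`, and slope restriction gives
`(φ s₁ - φ s₂)((s₁ - s₂) - (φ s₁ - φ s₂)) ≥ 0`. The bounds on `‖ũ‖₁` and `‖ũ‖₂²` finish the proof.
-/

open Matrix

/-- A function φ : ℝ → ℝ is [0,1]-slope-restricted if
0 ≤ (φ(s₁) − φ(s₂))/(s₁ − s₂) ≤ 1 for all s₁ ≠ s₂. -/
def SlopeRestricted01 (φ : ℝ → ℝ) : Prop :=
  ∀ s₁ s₂ : ℝ, s₁ ≠ s₂ →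
    0 ≤ (φ s₁ - φ s₂) / (s₁ - s₂) ∧ (φ s₁ - φ s₂) / (s₁ - s₂) ≤ 1

section PosNegPart

variable {α : Type*} [Ring α] [LinearOrder α] [IsOrderedRing α]

lemma posPart_mul_add_negPart_mul (a c : α) : a⁺ * c * a⁺ + a⁻ * c * a⁻ = a * c * a := by
  rcases le_total 0 a with ha | ha
  · simp [posPart_of_nonneg ha, negPart_of_nonneg ha]
  · simp [posPart_of_nonpos ha, negPart_of_nonpos ha]

lemma posPart_sq_add_negPart_sq (a : α) : a⁺ ^ 2 + a⁻ ^ 2 = a ^ 2 := by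
  simpa only [mul_one, sq] using posPart_mul_add_negPart_mul a 1

end PosNegPart

lemma SlopeRestricted01.incremental_sector {φ : ℝ → ℝ} (h : SlopeRestricted01 φ) (s₁ s₂ : ℝ) :
    0 ≤ (φ s₁ - φ s₂) * ((s₁ - s₂) - (φ s₁ - φ s₂)) := by
  rcases eq_or_ne s₁ s₂ with rfl | hne
  · simp
  obtain ⟨hq₀, hq₁⟩ := h s₁ s₂ hne
  set q := (φ s₁ - φ s₂) / (s₁ - s₂)
  have hφ : φ s₁ - φ s₂ = q * (s₁ - s₂) := (div_mul_cancel₀ _ (sub_ne_zero.mpr hne)).symm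
  calc 0 ≤ q * (1 - q) * (s₁ - s₂) ^ 2 :=
        mul_nonneg (mul_nonneg hq₀ (sub_nonneg.mpr hq₁)) (sq_nonneg _)
    _ = (φ s₁ - φ s₂) * ((s₁ - s₂) - (φ s₁ - φ s₂)) := by rw [hφ]; ring

lemma sum_incremental_sector_nonneg {ι : Type*} [Fintype ι] {φ : ι → ℝ → ℝ}
    (hφ : ∀ i, SlopeRestricted01 (φ i)) {T : ι → ℝ} (hT : ∀ i, 0 ≤ T i)
    {v₁ v₂ z₁ z₂ : ι → ℝ} (hz₁ : ∀ i, z₁ i = φ i (v₁ i)) (hz₂ : ∀ i, z₂ i = φ i (v₂ i)) :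
    0 ≤ ∑ i, (z₁ - z₂) i * T i * ((v₁ - v₂) - (z₁ - z₂)) i := by
  refine Finset.sum_nonneg fun i _ => ?_
  have := mul_nonneg (hT i) ((hφ i).incremental_sector (v₁ i) (v₂ i))
  simp only [Pi.sub_apply, hz₁, hz₂]
  linarith

lemma Matrix.mulVec_sub_add_mulVec_sub {R m n p : Type*} [Ring R] [Fintype n] [Fintype p]
    (A : Matrix m n R) (B : Matrix m p R) (x₁ x₂ : n → R) (y₁ y₂ : p → R) (c : m → R) :
    A *ᵥ (x₁ - x₂) + B *ᵥ (y₁ - y₂) = (A *ᵥ x₁ + B *ᵥ y₁ + c) - (A *ᵥ x₂ + B *ᵥ y₂ + c) := by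
  rw [mulVec_sub, mulVec_sub]
  abel

theorem robustness_from_scalarized_SDP_general (n nu ng : ℕ)
    (φ : Fin n → ℝ → ℝ) (hφ : ∀ i, SlopeRestricted01 (φ i))
    (Φ : (Fin n → ℝ) → (Fin n → ℝ)) (hΦ : ∀ v i, Φ v i = φ i (v i))
    (Ψz : Matrix (Fin n) (Fin n) ℝ) (Ψu : Matrix (Fin n) (Fin nu) ℝ)
    (Ψgz : Matrix (Fin ng) (Fin n) ℝ) (Ψgu : Matrix (Fin ng) (Fin nu) ℝ)
    (β : Fin n → ℝ) (βg : Fin ng → ℝ)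
    (εu1 εu2 : ℝ)
    (Tz : Fin n → ℝ) (hTz : ∀ i, 0 < Tz i)
    (Tg : Fin ng → ℝ) (hTg : ∀ i, 0 < Tg i)
    (Tu1 Tu2 : ℝ) (hTu1 : 0 ≤ Tu1) (hTu2 : 0 ≤ Tu2)
    (γ γu1 γu2 : ℝ)
    (hE : ∀ (ap am : Fin ng → ℝ) (cp cm : Fin nu → ℝ)
        (zt : Fin n → ℝ) (ut : Fin nu → ℝ) (t : ℝ),
      -(∑ i, ap i * Tg i * ap i) - (∑ i, am i * Tg i * am i)
        + 2 * (∑ i, (ap i - am i) * Tg i * ((Ψgz.mulVec zt + Ψgu.mulVec ut) i))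
        + t * (∑ i, (ap i + am i))
        - (1 / 2) * (Tu2 + γu2) * ((∑ i, (cp i) ^ 2) + (∑ i, (cm i) ^ 2))
        - t * (Tu1 + γu1) * (∑ i, (cp i + cm i))
        + 2 * (∑ i, zt i * Tz i * ((Ψz.mulVec zt + Ψu.mulVec ut - zt) i))
        - (1 / 2) * (Tu2 + γu2) * (∑ i, (ut i) ^ 2)
        + t ^ 2 * (Tu1 * εu1 + Tu2 * εu2 - γ) ≤ 0) :
    ∀ (u₁ u₂ : Fin nu → ℝ),
      (∑ i, |u₁ i - u₂ i|) ≤ εu1 →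
      (∑ i, (u₁ i - u₂ i) ^ 2) ≤ εu2 →
      ∀ (z₁ z₂ : Fin n → ℝ),
        z₁ = Φ (Ψz.mulVec z₁ + Ψu.mulVec u₁ + β) →
        z₂ = Φ (Ψz.mulVec z₂ + Ψu.mulVec u₂ + β) →
        (∑ i, |(Ψgz.mulVec z₁ + Ψgu.mulVec u₁ + βg) i
                - (Ψgz.mulVec z₂ + Ψgu.mulVec u₂ + βg) i|)
          ≤ γ + γu1 * (∑ i, |u₁ i - u₂ i|) + γu2 * (∑ i, (u₁ i - u₂ i) ^ 2) := by
  intro u₁ u₂ hu₁ hu₂ z₁ z₂ hz₁ hz₂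
  have hsector := sum_incremental_sector_nonneg hφ (fun i => (hTz i).le)
    (fun i => (congrFun hz₁ i).trans (hΦ _ i)) (fun i => (congrFun hz₂ i).trans (hΦ _ i))
  rw [← mulVec_sub_add_mulVec_sub] at hsector
  have hout : ∀ i, (Ψgz *ᵥ z₁ + Ψgu *ᵥ u₁ + βg) i - (Ψgz *ᵥ z₂ + Ψgu *ᵥ u₂ + βg) i
      = (Ψgz *ᵥ (z₁ - z₂) + Ψgu *ᵥ (u₁ - u₂)) i := fun i => by
    rw [mulVec_sub_add_mulVec_sub _ _ _ _ _ _ βg, Pi.sub_apply]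
  have hEp := hE (Ψgz *ᵥ (z₁ - z₂) + Ψgu *ᵥ (u₁ - u₂))⁺ (Ψgz *ᵥ (z₁ - z₂) + Ψgu *ᵥ (u₁ - u₂))⁻
    (u₁ - u₂)⁺ (u₁ - u₂)⁻ (z₁ - z₂) (u₁ - u₂) 1
  simp only [Pi.posPart_apply, Pi.negPart_apply, posPart_sub_negPart, posPart_add_negPart,
    Pi.sub_apply, one_mul, one_pow] at hEp hsector
  simp only [hout]
  generalize Ψgz *ᵥ (z₁ - z₂) + Ψgu *ᵥ (u₁ - u₂) = g at hEp ⊢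
  have hg : 0 ≤ ∑ i, g i * Tg i * g i := Finset.sum_nonneg fun i _ => by
    rw [mul_right_comm]
    exact mul_nonneg (mul_self_nonneg _) (hTg i).le
  have hgp : ∑ i, (g i)⁺ * Tg i * (g i)⁺ + ∑ i, (g i)⁻ * Tg i * (g i)⁻
      = ∑ i, g i * Tg i * g i := by
    simp only [← Finset.sum_add_distrib, posPart_mul_add_negPart_mul]
  have hup : ∑ i, (u₁ i - u₂ i)⁺ ^ 2 + ∑ i, (u₁ i - u₂ i)⁻ ^ 2 = ∑ i, (u₁ i - u₂ i) ^ 2 := by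
    simp only [← Finset.sum_add_distrib, posPart_sq_add_negPart_sq]
  rw [hup] at hEp
  linarith [mul_le_mul_of_nonneg_left hu₁ hTu1, mul_le_mul_of_nonneg_left hu₂ hTu2]

/-- Theorem 1 of the paper, robustness part, in scalarized form: if the
quadratic form E associated with the semidefinite constraint (13) is ≤ 0 for
all arguments, then the network g satisfies the 1-norm incremental robustness
bound. -/
theorem robustness_from_scalarized_SDP (n nu ng : ℕ)
    (φ : Fin n → ℝ → ℝ) (hφ : ∀ i, SlopeRestricted01 (φ i))
    (Φ : (Fin n → ℝ) → (Fin n → ℝ)) (hΦ : ∀ v i, Φ v i = φ i (v i))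
    (Ψz : Matrix (Fin n) (Fin n) ℝ) (Ψu : Matrix (Fin n) (Fin nu) ℝ)
    (Ψgz : Matrix (Fin ng) (Fin n) ℝ) (Ψgu : Matrix (Fin ng) (Fin nu) ℝ)
    (β : Fin n → ℝ) (βg : Fin ng → ℝ)
    (εu1 εu2 : ℝ) (hε1 : 0 ≤ εu1) (hε2 : 0 ≤ εu2)
    (Tz : Fin n → ℝ) (hTz : ∀ i, 0 < Tz i)
    (Tg : Fin ng → ℝ) (hTg : ∀ i, 0 < Tg i)
    (Tu1 Tu2 : ℝ) (hTu1 : 0 ≤ Tu1) (hTu2 : 0 ≤ Tu2)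
    (γ γu1 γu2 : ℝ) (hγ : 0 ≤ γ) (hγ1 : 0 ≤ γu1) (hγ2 : 0 ≤ γu2)
    (hE : ∀ (ap am : Fin ng → ℝ) (cp cm : Fin nu → ℝ)
        (zt : Fin n → ℝ) (ut : Fin nu → ℝ) (t : ℝ),
      -(∑ i, ap i * Tg i * ap i) - (∑ i, am i * Tg i * am i)
        + 2 * (∑ i, (ap i - am i) * Tg i * ((Ψgz.mulVec zt + Ψgu.mulVec ut) i))
        + t * (∑ i, (ap i + am i))
        - (1 / 2) * (Tu2 + γu2) * ((∑ i, (cp i) ^ 2) + (∑ i, (cm i) ^ 2))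
        - t * (Tu1 + γu1) * (∑ i, (cp i + cm i))
        + 2 * (∑ i, zt i * Tz i * ((Ψz.mulVec zt + Ψu.mulVec ut - zt) i))
        - (1 / 2) * (Tu2 + γu2) * (∑ i, (ut i) ^ 2)
        + t ^ 2 * (Tu1 * εu1 + Tu2 * εu2 - γ) ≤ 0) :
    ∀ (u₁ u₂ : Fin nu → ℝ),
      (∑ i, |u₁ i - u₂ i|) ≤ εu1 →
      (∑ i, (u₁ i - u₂ i) ^ 2) ≤ εu2 →
      ∀ (z₁ z₂ : Fin n → ℝ),
        z₁ = Φ (Ψz.mulVec z₁ + Ψu.mulVec u₁ + β) →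
        z₂ = Φ (Ψz.mulVec z₂ + Ψu.mulVec u₂ + β) →
        (∑ i, |(Ψgz.mulVec z₁ + Ψgu.mulVec u₁ + βg) i
                - (Ψgz.mulVec z₂ + Ψgu.mulVec u₂ + βg) i|)
          ≤ γ + γu1 * (∑ i, |u₁ i - u₂ i|) + γu2 * (∑ i, (u₁ i - u₂ i) ^ 2) :=
  robustness_from_scalarized_SDP_general n nu ng φ hφ Φ hΦ Ψz Ψu Ψgz Ψgu β βg εu1 εu2 Tz hTz Tg hTg
    Tu1 Tu2 hTu1 hTu2 γ γu1 γu2 hE
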